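/- arXiv:1908.06156 — 8 statements merged into one kernel-verified Lean document; each statement's English description precedes it below -/
import Mathlib

section
/- A ring S is isomorphic to a B-ring R ⊆ Gh(I) for some finite set I if and only if S is a commutative ring which, as a ℤ-module, is torsion-free of finite rank, and ℚ ⊗_ℤ S is isomorphic as a ℚ-algebra to a finite product of copies of ℚ (namely |I| copies). -/
/-!
`ℚ ⊗[ℤ] S` is the localization of `S` at the nonzero integers. Hence an injective ring map `f`
from `S` into a commutative `ℚ`-algebra `B` extends to an injective map `ℚ ⊗[ℤ] S → B`, which is
onto when the image of `f` spans `B`. For a B-ring `R ⊆ ℤ^I` the image spans `ℚ^I`: multiplying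
the separating elements for a fixed `i` gives an element of `R` supported exactly at `i`.
Conversely, if `ℚ ⊗[ℤ] S ≅ ℚ^I`, then `S` embeds in `ℚ^I`; the coordinates of its elements are
integral over `ℤ`, hence integers, and a nonzero integer multiple of each idempotent `eᵢ` lies in
the image, which makes the image a B-ring.
-/

open scoped TensorProduct

/-- `Gh I = ∏_{i ∈ I} ℤ` is the ghost ring; a subring `R ⊆ Gh I` is a *B-ring* if for all
distinct `i, j ∈ I` there is `r ∈ R` with `r i ≠ 0` and `r j = 0`. -/
def IsBRing {I : Type*} (R : Subring (I → ℤ)) : Prop :=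
  ∀ i j : I, i ≠ j → ∃ r ∈ R, r i ≠ 0 ∧ r j = 0

open Function

section RatTensor

variable {A B : Type*} [Ring A] [CommRing B] [Algebra ℚ B] (f : A →+* B)

noncomputable def RingHom.ratTensorLift : ℚ ⊗[ℤ] A →ₐ[ℚ] B :=
  Algebra.TensorProduct.lift (Algebra.ofId ℚ B) f.toIntAlgHom fun _ _ => .all _ _

@[simp]
theorem RingHom.ratTensorLift_tmul (q : ℚ) (a : A) : f.ratTensorLift (q ⊗ₜ a) = q • f a := by
  simp [RingHom.ratTensorLift, Algebra.smul_def]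

theorem RingHom.ratTensorLift_injective (hf : Injective f) : Injective f.ratTensorLift :=
  IsLocalizedModule.injective_of_map_zero (nonZeroDivisors ℤ) (TensorProduct.mk ℤ ℚ A 1)
    (g := f.ratTensorLift.toLinearMap.restrictScalars ℤ) fun a ha => by
      change f.ratTensorLift (1 ⊗ₜ a) = 0 at ha
      rw [ratTensorLift_tmul, one_smul, map_eq_zero_iff f hf] at ha
      simp [ha]

theorem RingHom.ratTensorLift_surjective (hf : Submodule.span ℚ (Set.range f) = ⊤) :
    Surjective f.ratTensorLift := by
  rw [← AlgHom.coe_toLinearMap, ← LinearMap.range_eq_top, eq_top_iff, ← hf, Submodule.span_le]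
  rintro _ ⟨a, rfl⟩
  exact ⟨1 ⊗ₜ a, by simp⟩

end RatTensor

theorem TensorProduct.rat_one_tmul_injective {M : Type*} [AddCommGroup M]
    [NoZeroSMulDivisors ℤ M] : Injective fun m : M => (1 : ℚ) ⊗ₜ[ℤ] m :=
  (IsLocalizedModule.injective_iff_isRegular (nonZeroDivisors ℤ)
    (TensorProduct.mk ℤ ℚ M 1)).mpr fun c =>
      IsSMulRegular.of_ne_zero (nonZeroDivisors.coe_ne_zero c)

theorem TensorProduct.rat_exists_zsmul_eq_one_tmul {M : Type*} [AddCommGroup M]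
    (x : ℚ ⊗[ℤ] M) : ∃ n : ℤ, n ≠ 0 ∧ ∃ m : M, n • x = (1 : ℚ) ⊗ₜ m := by
  obtain ⟨⟨m, n⟩, h⟩ := IsLocalizedModule.surj (nonZeroDivisors ℤ) (TensorProduct.mk ℤ ℚ M 1) x
  exact ⟨n, nonZeroDivisors.coe_ne_zero n, m, h⟩

section Subring

variable {S T : Type*} [Ring S] [CommRing T] {R : Subring T}

theorem mul_comm_of_ringEquiv_subring (e : S ≃+* R) (a b : S) : a * b = b * a :=
  e.injective (by simp [mul_comm])

theorem Module.Finite.int_of_ringEquiv_subring [IsNoetherian ℤ T] (e : S ≃+* R) :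
    Module.Finite ℤ S :=
  have : Module.Finite ℤ R :=
    inferInstanceAs (Module.Finite ℤ (AddSubgroup.toIntSubmodule R.toAddSubgroup))
  .equiv e.toAddEquiv.toIntLinearEquiv.symm

theorem NoZeroSMulDivisors.int_of_ringEquiv_subring [NoZeroSMulDivisors ℤ T] (e : S ≃+* R) :
    NoZeroSMulDivisors ℤ S :=
  Injective.noZeroSMulDivisors (fun s => (e s : T)) (Subtype.val_injective.comp e.injective)
    (by simp) fun c s => by simp

end Subring

section Forward

variable {S I : Type*} [Ring S] {R : Subring (I → ℤ)}

theorem IsBRing.exists_mem_ne_zero_eq_zero [Fintype I] (hR : IsBRing R) (i : I) :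
    ∃ r ∈ R, r i ≠ 0 ∧ ∀ j ≠ i, r j = 0 := by
  classical
  choose r hrR hri hrj using hR i
  refine ⟨∏ j : {j // i ≠ j}, r j j.2, prod_mem fun j _ => hrR j j.2, ?_, fun k hk => ?_⟩
  · rw [Finset.prod_apply, Finset.prod_ne_zero_iff]
    exact fun j _ => hri j j.2
  · rw [Finset.prod_apply]
    exact Finset.prod_eq_zero (Finset.mem_univ ⟨k, Ne.symm hk⟩) (hrj k _)

theorem IsBRing.span_range_eq_top [Fintype I] (hR : IsBRing R) :
    Submodule.span ℚ (Set.range (((Int.castRingHom ℚ).compLeft I).comp R.subtype)) = ⊤ := by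
  classical
  rw [eq_top_iff, ← (Pi.basisFun ℚ I).span_eq, Submodule.span_le]
  rintro _ ⟨i, rfl⟩
  obtain ⟨r, hr, hri, hrj⟩ := hR.exists_mem_ne_zero_eq_zero i
  have hsingle : Pi.single i 1 = (r i : ℚ)⁻¹ • (Int.castRingHom ℚ).compLeft I r := by
    ext j
    rcases eq_or_ne j i with rfl | hj <;> simp [*]
  rw [Pi.basisFun_apply, hsingle]
  exact Submodule.smul_mem _ _ (Submodule.subset_span ⟨⟨r, hr⟩, rfl⟩)

theorem IsBRing.nonempty_ratTensor_algEquiv [Fintype I] (hR : IsBRing R) (e : S ≃+* R) :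
    Nonempty ((ℚ ⊗[ℤ] S) ≃ₐ[ℚ] (I → ℚ)) := by
  set f := (((Int.castRingHom ℚ).compLeft I).comp R.subtype).comp (e : S →+* R)
  have hinj : Injective f :=
    Int.cast_injective.comp_left.comp (Subtype.val_injective.comp e.injective)
  have hspan : Submodule.span ℚ (Set.range f) = ⊤ := by
    rw [RingHom.coe_comp, Set.range_comp, RingEquiv.coe_toRingHom, Set.range_eq_univ.2 e.surjective,
      Set.image_univ, hR.span_range_eq_top]
  exact ⟨.ofBijective f.ratTensorLift ⟨f.ratTensorLift_injective hinj,
    f.ratTensorLift_surjective hspan⟩⟩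

end Forward

section Backward

theorem exists_ringHom_pi_int_of_isIntegral {S I : Type*} [CommRing S] [Algebra.IsIntegral ℤ S]
    (φ : S →+* (I → ℚ)) : ∃ F : S →+* (I → ℤ), ((Int.castRingHom ℚ).compLeft I).comp F = φ := by
  have hcoord (i : I) : ∃ ψ : S →+* ℤ, ∀ s, (ψ s : ℚ) = φ s i := by
    let := ((Pi.evalRingHom _ i).comp φ).toAlgebra
    exact ⟨(IsIntegralClosure.lift ℤ ℤ ℚ : S →ₐ[ℤ] ℤ).toRingHom,
      IsIntegralClosure.algebraMap_lift ℤ ℤ ℚ⟩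
  choose ψ hψ using hcoord
  exact ⟨RingHom.pi ψ, by ext s i; exact hψ i s⟩

theorem exists_isBRing_of_ratTensor_algEquiv {S I : Type*} [CommRing S] [Module.Finite ℤ S]
    [NoZeroSMulDivisors ℤ S] (g : (ℚ ⊗[ℤ] S) ≃ₐ[ℚ] (I → ℚ)) :
    ∃ R : Subring (I → ℤ), IsBRing R ∧ Nonempty (S ≃+* R) := by
  classical
  set φ : S →+* (I → ℚ) := g.toRingHom.comp Algebra.TensorProduct.includeRight.toRingHom
  obtain ⟨F, hF⟩ := exists_ringHom_pi_int_of_isIntegral φ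
  have hFφ (s : S) (i : I) : (F s i : ℚ) = φ s i := by rw [← hF]; rfl
  have hFinj : Injective F := fun a b hab =>
    TensorProduct.rat_one_tmul_injective <| g.injective <| funext fun i => by
      change φ a i = φ b i
      rw [← hFφ, ← hFφ, congrFun hab i]
  refine ⟨F.range, fun i j hij => ?_, ⟨RingEquiv.ofLeftInverse (leftInverse_invFun hFinj)⟩⟩
  obtain ⟨n, hn, s, hs⟩ := TensorProduct.rat_exists_zsmul_eq_one_tmul (g.symm (Pi.single i 1))
  have hφs : φ s = n • Pi.single i 1 := by simp [φ, ← hs]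
  refine ⟨F s, ⟨s, rfl⟩, fun h => hn ?_, Int.cast_injective (α := ℚ) ?_⟩
  · simpa [hφs] using (hFφ s i).symm.trans (congrArg Int.cast h)
  · simp [hFφ, hφs, Pi.single_eq_of_ne (Ne.symm hij)]

end Backward

/-- A ring `S` is isomorphic to a B-ring `R ⊆ Gh(I)` for some finite set `I` if and only if
`S` is a commutative ring which, as a `ℤ`-module, is torsion-free of finite rank, and
`ℚ ⊗_ℤ S` is isomorphic as a `ℚ`-algebra to a finite product of copies of `ℚ`
(namely `|I|` copies). -/
theorem stmt_0 (S : Type) [Ring S] :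
    ((∃ (I : Type) (_ : Fintype I) (R : Subring (I → ℤ)),
        IsBRing R ∧ Nonempty (S ≃+* R)) ↔
      ((∀ a b : S, a * b = b * a) ∧ Module.Finite ℤ S ∧ NoZeroSMulDivisors ℤ S ∧
        ∃ (I : Type) (_ : Fintype I), Nonempty ((ℚ ⊗[ℤ] S) ≃ₐ[ℚ] (I → ℚ)))) ∧
    (∀ (I : Type) (_ : Fintype I) (R : Subring (I → ℤ)),
      IsBRing R → Nonempty (S ≃+* R) → Nonempty ((ℚ ⊗[ℤ] S) ≃ₐ[ℚ] (I → ℚ))) := by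
  refine ⟨⟨?_, ?_⟩, fun I _ R hR ⟨e⟩ => hR.nonempty_ratTensor_algEquiv e⟩
  · rintro ⟨I, _, R, hR, ⟨e⟩⟩
    exact ⟨mul_comm_of_ringEquiv_subring e, .int_of_ringEquiv_subring e,
      .int_of_ringEquiv_subring e, I, inferInstance, hR.nonempty_ratTensor_algEquiv e⟩
  · rintro ⟨hcomm, _, _, I, hI, ⟨g⟩⟩
    let : CommRing S := { ‹Ring S› with mul_comm := hcomm }
    obtain ⟨R, hR, he⟩ := exists_isBRing_of_ratTensor_algEquiv g
    exact ⟨I, hI, R, hR, he⟩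
end

section
/- Let R ⊆ Gh(I) be a B-ring, p a prime, and let E be an equivalence class of the relation ∼_p on I. Then there exists r ∈ R such that r(i) ≡ 1 (mod p) for every i ∈ E and r(j) ≡ 0 (mod p) for every j ∈ I with j ∉ E. -/
/-- The equivalence relation `∼_p` on `I`: `i ∼_p j` iff `r i ≡ r j (mod p)` for all `r ∈ R`
(equivalently, `i = j` or `p ∣ d(i, j)` where `d(i, j)` is the greatest positive integer
dividing `r i - r j` for all `r ∈ R`). -/
def SimP {I : Type*} (R : Subring (I → ℤ)) (p : ℕ) (i j : I) : Prop :=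
  ∀ r ∈ R, (p : ℤ) ∣ (r i - r j)

/-!
If `i₀ ≁_p j`, some `s ∈ R` separates them mod `p`, and `s - s j` lies in `R` (which contains
the constants), vanishes at `j` and is a unit mod `p` at `i₀`. By Fermat's little theorem the
product over all such `j` of the `(p - 1)`-st powers of these elements is `≡ 1` at `i₀` and
vanishes at every `j ≁_p i₀`; being in `R`, it is then `≡ 1` on the whole class of `i₀`.
-/

theorem SimP.modEq {I : Type*} {R : Subring (I → ℤ)} {p : ℕ} {i j : I} (h : SimP R p i j)
    {r : I → ℤ} (hr : r ∈ R) : r j ≡ r i [ZMOD p] :=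
  Int.modEq_iff_dvd.2 (h r hr)

theorem exists_mem_apply_eq_zero_not_dvd_of_not_simP {I : Type*} {R : Subring (I → ℤ)}
    {p : ℕ} {i j : I} (h : ¬ SimP R p i j) :
    ∃ u ∈ R, u j = 0 ∧ ¬ (p : ℤ) ∣ u i := by
  obtain ⟨s, hsR, hs⟩ : ∃ s ∈ R, ¬ (p : ℤ) ∣ s i - s j := by
    simpa only [SimP, not_forall, exists_prop] using h
  exact ⟨s - ((s j : ℤ) : I → ℤ), R.sub_mem hsR (intCast_mem R _), by simp, by simpa using hs⟩

theorem exists_mem_modEq_one_and_eq_zero_outside_simP {I : Type*} [Fintype I]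
    (R : Subring (I → ℤ)) {p : ℕ} (hp : p.Prime) (i₀ : I) :
    ∃ r ∈ R, r i₀ ≡ 1 [ZMOD p] ∧ ∀ j, ¬ SimP R p i₀ j → r j = 0 := by
  classical
  choose u huR hu0 hup using fun j : {j // ¬ SimP R p i₀ j} ↦
    exists_mem_apply_eq_zero_not_dvd_of_not_simP j.2
  refine ⟨∏ j, u j ^ (p - 1), prod_mem fun j _ ↦ pow_mem (huR j) _, ?_, fun j hj ↦ ?_⟩
  · have hcop (j) : IsCoprime (u j i₀) p :=
      ((Irreducible.coprime_iff_not_dvd (Nat.prime_iff_prime_int.1 hp).irreducible).2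
        (hup j)).symm
    simpa only [Finset.prod_apply, Pi.pow_apply] using
      Int.ModEq.prod_one fun j _ ↦ Int.ModEq.pow_card_sub_one_eq_one hp (hcop j)
  · rw [Finset.prod_apply]
    exact Finset.prod_eq_zero (Finset.mem_univ ⟨j, hj⟩)
      (by rw [Pi.pow_apply, hu0, zero_pow (Nat.sub_ne_zero_of_lt hp.one_lt)])

theorem stmt_4_general (I : Type) [Fintype I] (R : Subring (I → ℤ))
    (p : ℕ) (hp : p.Prime) (i₀ : I) :
    ∃ r ∈ R, (∀ i : I, SimP R p i₀ i → (p : ℤ) ∣ (r i - 1)) ∧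
      (∀ j : I, ¬ SimP R p i₀ j → (p : ℤ) ∣ r j) := by
  obtain ⟨r, hrR, hr₁, hr₀⟩ := exists_mem_modEq_one_and_eq_zero_outside_simP R hp i₀
  refine ⟨r, hrR, fun i hi ↦ ?_, fun j hj ↦ by simp [hr₀ j hj]⟩
  exact ((hi.modEq hrR).trans hr₁).symm.dvd

/-- Let `R ⊆ Gh(I)` be a B-ring, `p` a prime, and let `E` be an equivalence class of the
relation `∼_p` on `I` (here, the class of an element `i₀ ∈ I`).  Then there exists `r ∈ R`
with `r i ≡ 1 (mod p)` for every `i ∈ E` and `r j ≡ 0 (mod p)` for every `j ∉ E`. -/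
theorem stmt_4 (I : Type) [Fintype I] (R : Subring (I → ℤ)) (hR : IsBRing R)
    (p : ℕ) (hp : p.Prime) (i₀ : I) :
    ∃ r ∈ R, (∀ i : I, SimP R p i₀ i → (p : ℤ) ∣ (r i - 1)) ∧
      (∀ j : I, ¬ SimP R p i₀ j → (p : ℤ) ∣ r j) :=
  stmt_4_general I R p hp i₀
end

section
/- Let R ⊆ Gh(I) be a B-ring, p a prime, k = 𝔽_p, R̄ = R/pR, and let 𝓔 be the set of equivalence classes of ∼_p on I. The map θ : R̄ → ∏_{E∈𝓔} k induced by r ↦ (r(i) mod p)_{E∈𝓔} (where i is any element of E) is a well-defined surjective homomorphism of k-algebras whose kernel is exactly the Jacobson radical of R̄ (equivalently, the kernel is a nilpotent ideal). -/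
/-!
Reduction mod `p` is constant on the classes of `∼_p`, and by definition any two classes are
told apart by some `r ∈ R`. Over `𝔽_p` every constant lies in every subring, so a subring of
functions on a finite set separating points contains all indicator functions, hence everything:
`θ` is onto a finite product of fields, whose Jacobson radical is zero, so `J(R̄) ⊆ ker θ`.
Conversely, if `θ r̄ = 0` then `r = p s` with `s ∈ ℤ^I`, and `ℤ^I` is integral over `R`; by
lying over, every prime of `R` containing `p` contains `r`, so `r̄` is nilpotent. Finally `R̄`
is Noetherian, so its nilradical is nilpotent.
-/

set_option synthInstance.maxHeartbeats 400000
set_option maxHeartbeats 1000000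

noncomputable section

/-- Its quotient is the paper's set `𝓔` of classes. -/
def simPSetoid {I : Type*} (R : Subring (I → ℤ)) (p : ℕ) : Setoid I where
  r := SimP R p
  iseqv := by
    refine ⟨fun i r _ => by simp, fun {i j} h r hr => dvd_sub_comm.mp (h r hr),
      fun {i j k} h1 h2 r hr => ?_⟩
    have := dvd_add (h1 r hr) (h2 r hr)
    rwa [sub_add_sub_cancel] at this

theorem Subring.eq_top_of_separatesPoints {X K : Type*} [Finite X] [Field K]
    (hK : Function.Surjective (Int.cast : ℤ → K)) (S : Subring (X → K))
    (hS : ∀ x y, x ≠ y → ∃ f ∈ S, f x ≠ f y) : S = ⊤ := by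
  classical
  have : Fintype X := Fintype.ofFinite X
  have const_mem (c : K) : (fun _ => c : X → K) ∈ S := by
    obtain ⟨n, rfl⟩ := hK c
    exact intCast_mem S n
  have bump_mem (x y : X) : ∃ g ∈ S, g x = 1 ∧ (x ≠ y → g y = 0) := by
    by_cases hxy : x = y
    · exact ⟨1, one_mem S, rfl, absurd hxy⟩
    obtain ⟨f, hf, hfxy⟩ := hS x y hxy
    refine ⟨(f - fun _ => f y) * fun _ => (f x - f y)⁻¹,
      mul_mem (sub_mem hf (const_mem _)) (const_mem _), ?_, fun _ => by simp⟩
    simpa using mul_inv_cancel₀ (sub_ne_zero.2 hfxy)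
  choose g hgS hgx hgy using bump_mem
  have single_mem (x : X) (c : K) : Pi.single x c ∈ S := by
    have : Pi.single x c = (fun _ => c) * ∏ y ∈ Finset.univ.erase x, g x y := by
      ext z
      rcases eq_or_ne z x with rfl | hzx
      · simp [Finset.prod_apply, hgx]
      · rw [Pi.single_eq_of_ne hzx, Pi.mul_apply, Finset.prod_apply,
          Finset.prod_eq_zero (f := fun y => g x y z)
            (Finset.mem_erase.2 ⟨hzx, Finset.mem_univ z⟩) (hgy x z hzx.symm), mul_zero]
    rw [this]
    exact mul_mem (const_mem c) (prod_mem fun y _ => hgS x y)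
  refine eq_top_iff.2 fun f _ => ?_
  rw [← Finset.univ_sum_single f]
  exact sum_mem fun x _ => single_mem x (f x)

theorem Ideal.jacobson_bot_le_ker_of_surjective_pi {A X K : Type*} [CommRing A] [Field K]
    (θ : A →+* (X → K)) (hθ : Function.Surjective θ) :
    (⊥ : Ideal A).jacobson ≤ RingHom.ker θ := by
  intro a ha
  refine funext fun x => ?_
  have hmax : (RingHom.ker ((Pi.evalRingHom _ x).comp θ)).IsMaximal :=
    RingHom.ker_isMaximal_of_surjective _ ((Function.surjective_eval x).comp hθ)
  exact Ideal.mem_sInf.1 ha ⟨bot_le, hmax⟩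

theorem Ideal.comap_map_le_radical_of_isIntegral {A B : Type*} [CommRing A] [CommRing B]
    [Algebra A B] [Algebra.IsIntegral A B] (hinj : Function.Injective (algebraMap A B))
    (J : Ideal A) : (J.map (algebraMap A B)).comap (algebraMap A B) ≤ J.radical := by
  intro a ha
  rw [Ideal.radical_eq_sInf, Ideal.mem_sInf]
  rintro P ⟨hJP, hP⟩
  obtain ⟨Q, -, -, rfl⟩ := Ideal.exists_ideal_over_prime_of_isIntegral P (⊥ : Ideal B) (by
    rw [← RingHom.ker_eq_comap_bot, (RingHom.injective_iff_ker_eq_bot _).1 hinj]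
    exact bot_le)
  exact Ideal.comap_mono (Ideal.map_le_of_le_comap hJP) ha

instance Subring.isNoetherianRing_of_isNoetherian_int {B : Type*} [CommRing B] [IsNoetherian ℤ B]
    (R : Subring B) : IsNoetherianRing R :=
  have : IsNoetherian ℤ R :=
    isNoetherian_of_injective R.subtype.toAddMonoidHom.toIntLinearMap Subtype.val_injective
  isNoetherian_of_tower ℤ inferInstance

namespace SimP

variable {I : Type*} {R : Subring (I → ℤ)} {p : ℕ}

theorem intCast_eq {i j : I} (h : SimP R p i j) (r : R) :
    ((r : I → ℤ) i : ZMod p) = ((r : I → ℤ) j : ZMod p) :=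
  (ZMod.intCast_eq_intCast_iff_dvd_sub _ _ _).2 (dvd_sub_comm.1 (h r r.2))

end SimP

section Reduction

variable {I : Type*} (R : Subring (I → ℤ)) (p : ℕ)

def reduceModP : R →+* (Quotient (simPSetoid R p) → ZMod p) where
  toFun r := Quotient.lift (fun i => ((r : I → ℤ) i : ZMod p)) fun _ _ h => SimP.intCast_eq h r
  map_one' := funext <| Quotient.ind fun _ => Int.cast_one
  map_mul' _ _ := funext <| Quotient.ind fun _ => Int.cast_mul _ _
  map_zero' := funext <| Quotient.ind fun _ => Int.cast_zero
  map_add' _ _ := funext <| Quotient.ind fun _ => Int.cast_add _ _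

@[simp]
theorem reduceModP_mk (r : R) (i : I) :
    reduceModP R p r (Quotient.mk _ i) = ((r : I → ℤ) i : ZMod p) := rfl

theorem reduceModP_eq_zero_iff (r : R) :
    reduceModP R p r = 0 ↔ ∀ i, (p : ℤ) ∣ (r : I → ℤ) i := by
  refine ⟨fun h i => ?_, fun h => funext <| Quotient.ind fun i => ?_⟩
  · exact (ZMod.intCast_zmod_eq_zero_iff_dvd _ p).1 (congrFun h (Quotient.mk _ i))
  · exact (ZMod.intCast_zmod_eq_zero_iff_dvd _ p).2 (h i)

theorem span_natCast_le_ker_reduceModP : Ideal.span {(p : R)} ≤ RingHom.ker (reduceModP R p) := by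
  rw [Ideal.span_le, Set.singleton_subset_iff, SetLike.mem_coe, RingHom.mem_ker,
    reduceModP_eq_zero_iff]
  intro i
  simp

theorem reduceModP_surjective [Finite I] (hp : p.Prime) : Function.Surjective (reduceModP R p) := by
  have : Fact p.Prime := ⟨hp⟩
  refine RingHom.range_eq_top.1 (Subring.eq_top_of_separatesPoints ZMod.intCast_surjective _ ?_)
  intro E E' hEE'
  induction E using Quotient.ind with | _ i => ?_
  induction E' using Quotient.ind with | _ j => ?_
  obtain ⟨r, hr, hrij⟩ : ∃ r ∈ R, ¬ (p : ℤ) ∣ r i - r j := by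
    simpa [SimP] using fun h : SimP R p i j => hEE' (Quotient.sound h)
  refine ⟨_, ⟨⟨r, hr⟩, rfl⟩, ?_⟩
  rwa [reduceModP_mk, reduceModP_mk, Ne, ZMod.intCast_eq_intCast_iff_dvd_sub, dvd_sub_comm]

def residueMap : R ⧸ Ideal.span {(p : R)} →+* (Quotient (simPSetoid R p) → ZMod p) :=
  Ideal.Quotient.lift _ (reduceModP R p) fun _ h => span_natCast_le_ker_reduceModP R p h

theorem residueMap_surjective [Finite I] (hp : p.Prime) : Function.Surjective (residueMap R p) :=
  Ideal.Quotient.lift_surjective_of_surjective _ _ (reduceModP_surjective R p hp)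

theorem ker_residueMap_le_nilradical [Finite I] :
    RingHom.ker (residueMap R p) ≤ nilradical (R ⧸ Ideal.span {(p : R)}) := by
  intro x hx
  obtain ⟨r, rfl⟩ := Ideal.Quotient.mk_surjective x
  choose s hs using (reduceModP_eq_zero_iff R p r).1 hx
  have hr :
      algebraMap R (I → ℤ) r ∈ (Ideal.span {(p : R)}).map (algebraMap R (I → ℤ)) := by
    rw [Ideal.map_span, Set.image_singleton, Ideal.mem_span_singleton]
    refine ⟨s, funext fun i => ?_⟩
    show (r : I → ℤ) i = ((p : R) : I → ℤ) i * s i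
    simpa using hs i
  have : Algebra.IsIntegral R (I → ℤ) := Algebra.IsIntegral.tower_top ℤ
  obtain ⟨n, hn⟩ := Ideal.comap_map_le_radical_of_isIntegral (A := R) (B := I → ℤ)
    Subtype.val_injective _ hr
  exact mem_nilradical.2 ⟨n, by rw [← map_pow, Ideal.Quotient.eq_zero_iff_mem]; exact hn⟩

end Reduction

theorem stmt_5_general (I : Type) [Fintype I] (R : Subring (I → ℤ))
    (p : ℕ) (hp : p.Prime) :
    ∃ θ : (R ⧸ Ideal.span {(p : R)}) →+* (Quotient (simPSetoid R p) → ZMod p),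
      (∀ r : R, ∀ i : I,
        θ (Ideal.Quotient.mk _ r) (Quotient.mk (simPSetoid R p) i) = ((r : I → ℤ) i : ZMod p)) ∧
      Function.Surjective θ ∧
      RingHom.ker θ = Ideal.jacobson (⊥ : Ideal (R ⧸ Ideal.span {(p : R)})) ∧
      ∃ n : ℕ, (RingHom.ker θ) ^ n = ⊥ := by
  have : Fact p.Prime := ⟨hp⟩
  have hsurj := residueMap_surjective R p hp
  have hker_le_nil := ker_residueMap_le_nilradical R p
  have hjac_le_ker := Ideal.jacobson_bot_le_ker_of_surjective_pi _ hsurj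
  have hker : RingHom.ker (residueMap R p) = nilradical _ :=
    le_antisymm hker_le_nil (Ideal.radical_le_jacobson.trans hjac_le_ker)
  refine ⟨residueMap R p, fun r i => rfl, hsurj,
    le_antisymm (hker_le_nil.trans Ideal.radical_le_jacobson) hjac_le_ker, ?_⟩
  rw [hker]
  exact IsNoetherianRing.isNilpotent_nilradical _

/-- Let `R ⊆ Gh(I)` be a B-ring, `p` a prime, `k = 𝔽_p`, `R̄ = R/pR`, and `𝓔` the set of
equivalence classes of `∼_p` on `I`.  The map `θ : R̄ → ∏_{E ∈ 𝓔} k` induced by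
`r ↦ (r i mod p)_E` (for `i` any element of `E`) is a well-defined surjective homomorphism of
`k`-algebras (here: of rings; all rings in sight are `𝔽_p`-algebras via their characteristic)
whose kernel is exactly the Jacobson radical of `R̄` (equivalently, a nilpotent ideal). -/
theorem stmt_5 (I : Type) [Fintype I] (R : Subring (I → ℤ)) (hR : IsBRing R)
    (p : ℕ) (hp : p.Prime) :
    ∃ θ : (R ⧸ Ideal.span {(p : R)}) →+* (Quotient (simPSetoid R p) → ZMod p),
      (∀ r : R, ∀ i : I,
        θ (Ideal.Quotient.mk _ r) (Quotient.mk (simPSetoid R p) i) = ((r : I → ℤ) i : ZMod p)) ∧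
      Function.Surjective θ ∧
      RingHom.ker θ = Ideal.jacobson (⊥ : Ideal (R ⧸ Ideal.span {(p : R)})) ∧
      ∃ n : ℕ, (RingHom.ker θ) ^ n = ⊥ :=
  stmt_5_general I R p hp
end
end

section
/- Let R ⊆ Gh(I) be a B-ring, p a prime, k = 𝔽_p, R̄ = R/pR, and let 𝓔 be the set of equivalence classes of ∼_p on I. Then R̄ has exactly |𝓔| maximal ideals, every simple R̄-module is one-dimensional over k, and the modules k_E for E ∈ 𝓔 form a complete irredundant set of simple R̄-modules (k_E ≅ k_{E'} as R̄-modules iff E = E'). -/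
set_option synthInstance.maxHeartbeats 400000
set_option maxHeartbeats 1000000

noncomputable section

open CategoryTheory

variable {I : Type} (R : Subring (I → ℤ)) (p : ℕ)

/-- The ring homomorphism `R̄ = R/pR → 𝔽_p` given by `r ↦ r i mod p`, for `i` a representative
of the `∼_p`-equivalence class `E`. -/
def kEhom (E : Quotient (simPSetoid R p)) :
    (R ⧸ Ideal.span {(p : R)}) →+* ZMod p := by
  refine Ideal.Quotient.lift _
    ((Int.castRingHom (ZMod p)).comp ((Pi.evalRingHom (fun _ => ℤ) E.out).comp R.subtype)) ?_
  have key : ((Int.castRingHom (ZMod p)).comp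
      ((Pi.evalRingHom (fun _ => ℤ) E.out).comp R.subtype)) ((p : R)) = 0 := by
    simp [map_natCast]
  intro a ha
  rw [Ideal.mem_span_singleton] at ha
  obtain ⟨c, rfl⟩ := ha
  rw [map_mul, key, zero_mul]

/-- `k_E`: the `R̄`-module `𝔽_p` where `r` acts through multiplication by `r i mod p`,
for `i` any element of the class `E`. -/
def kE (E : Quotient (simPSetoid R p)) : ModuleCat (R ⧸ Ideal.span {(p : R)}) :=
  letI : Module (R ⧸ Ideal.span {(p : R)}) (ZMod p) := Module.compHom (ZMod p) (kEhom R p E)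
  ModuleCat.of _ (ZMod p)


/-! Each `∼_p`-class `E` gives a surjection `R̄ → 𝔽_p`, `r ↦ r(i) mod p`, and distinct classes give
distinct kernels. An element killed by all of them lifts to `r = p • s` with `s ∈ ℤ^I`; as `ℤ^I`
is integral over `R`, `p` divides a power of `r` in `R`, so the intersection of the kernels is nil.
Hence every prime of `R̄` contains, and therefore equals, one of these maximal kernels; every simple
module `R̄ ⧸ 𝔪` is then some `k_E`, and `k_E` is determined by its annihilator, the kernel at `E`. -/

open Polynomial in
theorem exists_dvd_pow_of_algebraMap_mul_eq {S A : Type*} [CommRing S] [CommRing A] [Algebra S A]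
    [Algebra.IsIntegral S A] (hinj : Function.Injective (algebraMap S A)) {x y : S} {z : A}
    (hz : algebraMap S A x * z = algebraMap S A y) : ∃ m, x ∣ y ^ m := by
  obtain ⟨q, hq, hqz⟩ := Algebra.IsIntegral.isIntegral (R := S) z
  exact ⟨_, dvd_pow_natDegree_of_eval₂_eq_zero hinj hq x y z hqz hz⟩

theorem Ideal.exists_eq_of_iInf_le_nilradical {A ι : Type*} [CommRing A] [Finite ι]
    {J : ι → Ideal A} (hJ : ∀ i, (J i).IsMaximal) (hnil : ⨅ i, J i ≤ nilradical A)
    (P : Ideal A) [hP : P.IsPrime] : ∃ i, J i = P := by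
  have : Fintype ι := Fintype.ofFinite ι
  obtain ⟨i, -, hle⟩ := hP.inf_le'.mp <|
    (Finset.inf_univ_eq_iInf J).trans_le (hnil.trans (nilradical_le_prime P))
  exact ⟨i, (hJ i).eq_of_le hP.ne_top hle⟩

@[simp]
theorem kEhom_mk (E : Quotient (simPSetoid R p)) (r : R) :
    kEhom R p E (Ideal.Quotient.mk _ r) = ((r : I → ℤ) E.out : ZMod p) := by
  simp [kEhom]

theorem kEhom_surjective (E : Quotient (simPSetoid R p)) : Function.Surjective (kEhom R p E) :=
  fun x ↦
    let ⟨n, hn⟩ := ZMod.intCast_surjective x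
    ⟨n, by rw [map_intCast, hn]⟩

theorem isMaximal_ker_kEhom (hp : p.Prime) (E : Quotient (simPSetoid R p)) :
    (RingHom.ker (kEhom R p E)).IsMaximal :=
  have : Fact p.Prime := ⟨hp⟩
  RingHom.ker_isMaximal_of_surjective _ (kEhom_surjective R p E)

theorem ker_kEhom_injective : Function.Injective fun E ↦ RingHom.ker (kEhom R p E) := by
  intro E E' (hker : RingHom.ker _ = RingHom.ker _)
  by_contra hne
  have hnsim : ¬ SimP R p E.out E'.out := fun h ↦ hne (Quotient.out_equiv_out.mp h)
  obtain ⟨r, hr, hndvd⟩ : ∃ r ∈ R, ¬ (p : ℤ) ∣ r E.out - r E'.out := by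
    simpa [SimP] using hnsim
  let a : R := ⟨r - ((r E'.out : ℤ) : I → ℤ), sub_mem hr (intCast_mem R _)⟩
  have ha : Ideal.Quotient.mk _ a ∈ RingHom.ker (kEhom R p E') := by simp [a]
  rw [← hker, RingHom.mem_ker, kEhom_mk, ZMod.intCast_zmod_eq_zero_iff_dvd] at ha
  exact hndvd (by simpa [a] using ha)

theorem iInf_ker_kEhom_le_nilradical [Finite I] :
    ⨅ E, RingHom.ker (kEhom R p E) ≤ nilradical (R ⧸ Ideal.span {(p : R)}) := by
  intro x hx
  obtain ⟨r, rfl⟩ := Ideal.Quotient.mk_surjective x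
  have hdvd : ∀ i, (p : ℤ) ∣ (r : I → ℤ) i := fun i ↦ by
    have hi := Submodule.mem_iInf _ |>.mp hx ⟦i⟧
    rw [RingHom.mem_ker, kEhom_mk, ZMod.intCast_zmod_eq_zero_iff_dvd] at hi
    simpa using dvd_sub hi (Quotient.mk_out (s := simPSetoid R p) i r r.2)
  have : Algebra.IsIntegral R (I → ℤ) := Algebra.IsIntegral.tower_top ℤ
  obtain ⟨m, hm⟩ := exists_dvd_pow_of_algebraMap_mul_eq (x := (p : R)) (y := r)
    (z := fun i ↦ (r : I → ℤ) i / p) Subtype.val_injective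
    (funext fun i ↦ Int.mul_ediv_cancel' (hdvd i))
  refine mem_nilradical.mpr ⟨m, ?_⟩
  rwa [← map_pow, Ideal.Quotient.eq_zero_iff_mem, Ideal.mem_span_singleton]

theorem exists_ker_kEhom_eq [Finite I] (hp : p.Prime) (P : Ideal (R ⧸ Ideal.span {(p : R)}))
    [P.IsPrime] : ∃ E, RingHom.ker (kEhom R p E) = P :=
  Ideal.exists_eq_of_iInf_le_nilradical (isMaximal_ker_kEhom R p hp)
    (iInf_ker_kEhom_le_nilradical R p) P

def quotientEquivMaximalIdeals [Finite I] (hp : p.Prime) :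
    Quotient (simPSetoid R p) ≃ {P : Ideal (R ⧸ Ideal.span {(p : R)}) // P.IsMaximal} :=
  Equiv.ofBijective (fun E ↦ ⟨_, isMaximal_ker_kEhom R p hp E⟩)
    ⟨fun _ _ h ↦ ker_kEhom_injective R p (congrArg Subtype.val h),
      fun ⟨P, _⟩ ↦ (exists_ker_kEhom_eq R p hp P).imp fun _ hE ↦ Subtype.ext hE⟩

def kELinearMap (E : Quotient (simPSetoid R p)) :
    (R ⧸ Ideal.span {(p : R)}) →ₗ[R ⧸ Ideal.span {(p : R)}] kE R p E where
  toFun := kEhom R p E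
  map_add' := map_add _
  map_smul' := map_mul (kEhom R p E)

def quotKerEquivKE (E : Quotient (simPSetoid R p)) :
    ((R ⧸ Ideal.span {(p : R)}) ⧸ RingHom.ker (kEhom R p E)) ≃ₗ[R ⧸ Ideal.span {(p : R)}]
      kE R p E :=
  LinearMap.quotKerEquivOfSurjective (kELinearMap R p E) (kEhom_surjective R p E)

theorem annihilator_kE (E : Quotient (simPSetoid R p)) :
    Module.annihilator (R ⧸ Ideal.span {(p : R)}) (kE R p E) = RingHom.ker (kEhom R p E) := by
  rw [← (quotKerEquivKE R p E).annihilator_eq, Ideal.annihilator_quotient]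

theorem isSimpleModule_kE (hp : p.Prime) (E : Quotient (simPSetoid R p)) :
    IsSimpleModule (R ⧸ Ideal.span {(p : R)}) (kE R p E) :=
  isSimpleModule_iff_quot_maximal.mpr
    ⟨_, isMaximal_ker_kEhom R p hp E, ⟨(quotKerEquivKE R p E).symm⟩⟩

theorem exists_linearEquiv_kE [Finite I] (hp : p.Prime) (M : Type*) [AddCommGroup M]
    [Module (R ⧸ Ideal.span {(p : R)}) M] [IsSimpleModule (R ⧸ Ideal.span {(p : R)}) M] :
    ∃ E, Nonempty (M ≃ₗ[R ⧸ Ideal.span {(p : R)}] kE R p E) := by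
  obtain ⟨J, hJ, ⟨e⟩⟩ := isSimpleModule_iff_quot_maximal.mp ‹IsSimpleModule _ M›
  obtain ⟨E, rfl⟩ := exists_ker_kEhom_eq R p hp J
  exact ⟨E, ⟨e.trans (quotKerEquivKE R p E)⟩⟩

theorem kE_iso_iff (E E' : Quotient (simPSetoid R p)) :
    Nonempty (kE R p E ≅ kE R p E') ↔ E = E' := by
  refine ⟨fun ⟨e⟩ ↦ ker_kEhom_injective R p ?_, fun h ↦ h ▸ ⟨Iso.refl _⟩⟩
  simp only [← annihilator_kE, e.toLinearEquiv.annihilator_eq]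

theorem stmt_6_general (I : Type) [Fintype I] (R : Subring (I → ℤ))
    (p : ℕ) (hp : p.Prime) :
    Nat.card {M : Ideal (R ⧸ Ideal.span {(p : R)}) // M.IsMaximal} =
        Nat.card (Quotient (simPSetoid R p)) ∧
    (∀ (M : Type) [AddCommGroup M] [Module (R ⧸ Ideal.span {(p : R)}) M],
        IsSimpleModule (R ⧸ Ideal.span {(p : R)}) M → Nat.card M = p) ∧
    (∀ E : Quotient (simPSetoid R p), IsSimpleModule (R ⧸ Ideal.span {(p : R)}) (kE R p E)) ∧
    (∀ M : ModuleCat (R ⧸ Ideal.span {(p : R)}),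
        IsSimpleModule (R ⧸ Ideal.span {(p : R)}) M →
          ∃ E : Quotient (simPSetoid R p), Nonempty (M ≅ kE R p E)) ∧
    (∀ E E' : Quotient (simPSetoid R p), Nonempty (kE R p E ≅ kE R p E') ↔ E = E') := by
  refine ⟨(Nat.card_congr (quotientEquivMaximalIdeals R p hp)).symm, fun M _ _ _ ↦ ?_,
    isSimpleModule_kE R p hp, fun M _ ↦ ?_, kE_iso_iff R p⟩
  · obtain ⟨E, ⟨e⟩⟩ := exists_linearEquiv_kE R p hp M
    exact (Nat.card_congr e.toEquiv).trans (Nat.card_zmod p)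
  · obtain ⟨E, ⟨e⟩⟩ := exists_linearEquiv_kE R p hp M
    exact ⟨E, ⟨e.toModuleIso⟩⟩

/-- Let `R ⊆ Gh(I)` be a B-ring, `p` a prime, `k = 𝔽_p`, `R̄ = R/pR`, `𝓔` the set of
equivalence classes of `∼_p` on `I`.  Then `R̄` has exactly `|𝓔|` maximal ideals, every simple
`R̄`-module is one-dimensional over `k` (i.e. has exactly `p` elements), and the modules `k_E`
for `E ∈ 𝓔` form a complete irredundant set of simple `R̄`-modules. -/
theorem stmt_6 (I : Type) [Fintype I] (R : Subring (I → ℤ)) (hR : IsBRing R)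
    (p : ℕ) (hp : p.Prime) :
    Nat.card {M : Ideal (R ⧸ Ideal.span {(p : R)}) // M.IsMaximal} =
        Nat.card (Quotient (simPSetoid R p)) ∧
    (∀ (M : Type) [AddCommGroup M] [Module (R ⧸ Ideal.span {(p : R)}) M],
        IsSimpleModule (R ⧸ Ideal.span {(p : R)}) M → Nat.card M = p) ∧
    (∀ E : Quotient (simPSetoid R p), IsSimpleModule (R ⧸ Ideal.span {(p : R)}) (kE R p E)) ∧
    (∀ M : ModuleCat (R ⧸ Ideal.span {(p : R)}),
        IsSimpleModule (R ⧸ Ideal.span {(p : R)}) M →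
          ∃ E : Quotient (simPSetoid R p), Nonempty (M ≅ kE R p E)) ∧
    (∀ E E' : Quotient (simPSetoid R p), Nonempty (kE R p E ≅ kE R p E') ↔ E = E') :=
  stmt_6_general I R p hp
end
end

section
/- Let R ⊆ Gh(I) be a B-ring and p a prime such that p ∤ d(i, j) for every pair of distinct i, j ∈ I. Then the 𝔽_p-algebra R/pR is semisimple, and is isomorphic to a product of |I| copies of 𝔽_p. -/
set_option synthInstance.maxHeartbeats 400000
set_option maxHeartbeats 1000000

/-!
Reduction modulo `p` maps `R` into `𝔽_p^I`. Since `p ∤ d(i, j)`, some `r ∈ R` has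
`r i ≢ r j (mod p)`, so the image is a subring of `𝔽_p^I` separating points, hence all of
`𝔽_p^I`. The kernel contains `pR`, and `R` is a lattice of rank at most `|I|`, so
`|R/pR| ≤ p^|I|`: the induced surjection `R/pR → 𝔽_p^I` is a bijection.
-/

theorem exists_not_prime_dvd_of_greatest_common_divisor {α : Type*} (s : Set α) (f : α → ℤ)
    {p d : ℕ} (hp : p.Prime) (hpd : ¬ p ∣ d) (hd : ∀ a ∈ s, (d : ℤ) ∣ f a)
    (hmax : ∀ e : ℕ, 0 < e → (∀ a ∈ s, (e : ℤ) ∣ f a) → e ≤ d) :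
    ∃ a ∈ s, ¬ (p : ℤ) ∣ f a := by
  by_contra! hdvd
  have hcop : IsCoprime (p : ℤ) d :=
    Int.isCoprime_iff_gcd_eq_one.2 (by simpa using hp.coprime_iff_not_dvd.2 hpd)
  have hd0 : 0 < d := Nat.pos_of_ne_zero fun h => hpd (h ▸ dvd_zero p)
  have hle : p * d ≤ d :=
    hmax (p * d) (Nat.mul_pos hp.pos hd0) fun a ha => by
      push_cast
      exact hcop.mul_dvd (hdvd a ha) (hd a ha)
  nlinarith [hp.two_le]

theorem Subring.eq_top_of_separatesPoints_s9 {I K : Type*} [Fintype I] [Field K]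
    (S : Subring (I → K)) (hconst : ∀ c : K, Function.const I c ∈ S)
    (hsep : (S : Set (I → K)).SeparatesPoints) : S = ⊤ := by
  classical
  have hsingle : ∀ i, Pi.single i 1 ∈ S := by
    intro i
    have hpair : ∀ j, j ≠ i → ∃ t ∈ S, t i = 1 ∧ t j = 0 := by
      intro j hji
      obtain ⟨s, hs, hsij⟩ := hsep hji.symm
      refine ⟨Function.const I (s i - s j)⁻¹ * (s - Function.const I (s j)),
        S.mul_mem (hconst _) (S.sub_mem hs (hconst _)), ?_, by simp⟩
      simp [inv_mul_cancel₀ (sub_ne_zero.2 hsij)]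
    choose t ht hti htj using hpair
    have hprod : Pi.single i 1 = ∏ j : {j // j ≠ i}, t j j.2 := by
      funext k
      rw [Finset.prod_apply]
      by_cases hk : k = i
      · subst hk
        simp [hti]
      · rw [Finset.prod_eq_zero (Finset.mem_univ ⟨k, hk⟩) (htj k hk)]
        simp [hk]
    rw [hprod]
    exact S.prod_mem fun j _ => ht j j.2
  refine eq_top_iff.2 fun v _ => ?_
  rw [← Finset.univ_sum_single v]
  refine S.sum_mem fun i _ => ?_
  have hsmul : Pi.single i (v i) = Function.const I (v i) * Pi.single i 1 := by
    ext k
    by_cases hk : k = i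
    · subst hk
      simp
    · simp [hk]
  rw [hsmul]
  exact S.mul_mem (hconst _) (hsingle i)

theorem Subring.const_mem_of_zmod {I : Type*} {n : ℕ} (S : Subring (I → ZMod n)) (c : ZMod n) :
    Function.const I c ∈ S := by
  have hc : ((c.cast : ℤ) : I → ZMod n) = Function.const I c := funext fun _ => by simp
  exact hc ▸ intCast_mem S (c.cast : ℤ)

theorem Ideal.natCard_quotient_span_natCast {A : Type*} [CommRing A] [Module.Free ℤ A]
    [Module.Finite ℤ A] (n : ℕ) :
    Nat.card (A ⧸ Ideal.span {(n : A)}) = n ^ Module.finrank ℤ A := by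
  rw [← AddSubgroup.index_range_nsmul]
  change (Ideal.span {(n : A)}).toAddSubgroup.index = _
  congr 1
  ext x
  simp [Ideal.mem_span_singleton', mul_comm]

namespace Subring

variable {I : Type*} (R : Subring (I → ℤ))

instance moduleIsTorsionFree_int : Module.IsTorsionFree ℤ R :=
  Subtype.val_injective.moduleIsTorsionFree _ fun _ _ => rfl

def reduceMod (n : ℕ) : R →+* (I → ZMod n) :=
  ((Int.castRingHom (ZMod n)).compLeft I).comp R.subtype

theorem reduceMod_apply (n : ℕ) (r : R) (i : I) : R.reduceMod n r i = ((r : I → ℤ) i : ZMod n) :=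
  rfl

theorem reduceMod_eq_zero_of_mem_span (n : ℕ) {a : R} (ha : a ∈ Ideal.span {(n : R)}) :
    R.reduceMod n a = 0 := by
  obtain ⟨b, rfl⟩ := Ideal.mem_span_singleton'.1 ha
  ext i
  simp [reduceMod_apply]

variable [Fintype I]

instance moduleFinite_int : Module.Finite ℤ R :=
  Module.Finite.of_injective R.subtype.toIntAlgHom.toLinearMap Subtype.val_injective

theorem finrank_int_le_card : Module.finrank ℤ R ≤ Fintype.card I := by
  simpa using LinearMap.finrank_le_finrank_of_injective
    (f := R.subtype.toIntAlgHom.toLinearMap) Subtype.val_injective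

theorem reduceMod_surjective {p : ℕ} [Fact p.Prime]
    (hsep : ∀ i j : I, i ≠ j → ∃ r ∈ R, ¬ (p : ℤ) ∣ r i - r j) :
    Function.Surjective (R.reduceMod p) := by
  refine RingHom.range_eq_top.1 <|
    (R.reduceMod p).range.eq_top_of_separatesPoints_s9 (const_mem_of_zmod _) fun i j hij => ?_
  obtain ⟨r, hr, hrp⟩ := hsep i j hij
  refine ⟨R.reduceMod p ⟨r, hr⟩, ⟨_, rfl⟩, ?_⟩
  simpa [reduceMod_apply, ZMod.intCast_eq_intCast_iff_dvd_sub, ← dvd_neg (b := r i - r j)]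
    using hrp

theorem natCard_quotient_span_le {p : ℕ} (hp : p.Prime) :
    Nat.card (R ⧸ Ideal.span {(p : R)}) ≤ Nat.card (I → ZMod p) := by
  rw [Ideal.natCard_quotient_span_natCast, Nat.card_fun, Nat.card_zmod, Nat.card_eq_fintype_card]
  exact Nat.pow_le_pow_right hp.pos R.finrank_int_le_card

end Subring

theorem stmt_9_general (I : Type) [Fintype I] (R : Subring (I → ℤ))
    (p : ℕ) (hp : p.Prime)
    (d : I → I → ℕ)
    (hddvd : ∀ i j : I, i ≠ j → ∀ r ∈ R, (d i j : ℤ) ∣ (r i - r j))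
    (hdmax : ∀ i j : I, i ≠ j → ∀ e : ℕ, 0 < e → (∀ r ∈ R, (e : ℤ) ∣ (r i - r j)) → e ≤ d i j)
    (hpd : ∀ i j : I, i ≠ j → ¬ (p ∣ d i j)) :
    IsSemisimpleRing (R ⧸ Ideal.span {(p : R)}) ∧
    Nonempty ((R ⧸ Ideal.span {(p : R)}) ≃+* (I → ZMod p)) := by
  have : Fact p.Prime := ⟨hp⟩
  have hsurj : Function.Surjective (R.reduceMod p) :=
    R.reduceMod_surjective fun i j hij =>
      exists_not_prime_dvd_of_greatest_common_divisor R (fun r : I → ℤ => r i - r j) hp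
        (hpd i j hij) (hddvd i j hij) (hdmax i j hij)
  have : Finite (R ⧸ Ideal.span {(p : R)}) := Nat.finite_of_card_ne_zero <| by
    rw [Ideal.natCard_quotient_span_natCast]
    exact pow_ne_zero _ hp.ne_zero
  let e := RingEquiv.ofBijective _ <|
    (Ideal.Quotient.lift_surjective_of_surjective _ (fun _ => R.reduceMod_eq_zero_of_mem_span p)
      hsurj).bijective_of_nat_card_le (R.natCard_quotient_span_le hp)
  exact ⟨e.symm.isSemisimpleRing, ⟨e⟩⟩

/-- Let `R ⊆ Gh(I)` be a B-ring and `p` a prime with `p ∤ d(i, j)` for all distinct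
`i, j ∈ I`, where `d(i, j)` is the greatest positive integer dividing `r i - r j` for all
`r ∈ R`.  Then the `𝔽_p`-algebra `R̄ = R/pR` is semisimple, and is isomorphic to a product
of `|I|` copies of `𝔽_p`. -/
theorem stmt_9 (I : Type) [Fintype I] (R : Subring (I → ℤ)) (hR : IsBRing R)
    (p : ℕ) (hp : p.Prime)
    (d : I → I → ℕ)
    (hd0 : ∀ i j : I, i ≠ j → 0 < d i j)
    (hddvd : ∀ i j : I, i ≠ j → ∀ r ∈ R, (d i j : ℤ) ∣ (r i - r j))
    (hdmax : ∀ i j : I, i ≠ j → ∀ e : ℕ, 0 < e → (∀ r ∈ R, (e : ℤ) ∣ (r i - r j)) → e ≤ d i j)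
    (hpd : ∀ i j : I, i ≠ j → ¬ (p ∣ d i j)) :
    IsSemisimpleRing (R ⧸ Ideal.span {(p : R)}) ∧
    Nonempty ((R ⧸ Ideal.span {(p : R)}) ≃+* (I → ZMod p)) :=
  stmt_9_general I R p hp d hddvd hdmax hpd
end

section
/- Let G be a finite group and let H, J be non-conjugate subgroups of G. Then there exist finite G-sets X and Y such that |X^J| = |Y^J| but |X^H| ≠ |Y^H|. (Equivalently, the mark homomorphisms realize the Burnside ring A(G) as a B-ring inside ∏_{(H)∈ccs(G)} ℤ.) -/
/-- Two subgroups of `G` are conjugate if one is `g H g⁻¹` for some `g ∈ G`. -/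
def IsConjSubgroup {G : Type*} [Group G] (H J : Subgroup G) : Prop :=
  ∃ g : G, Subgroup.map (MulAut.conj g).toMonoidHom H = J

/-- The Burnside ring `A(G)` of a finite group `G`, realized via the mark homomorphisms as the
subring of the ghost ring `∏_{H ≤ G} ℤ` generated by the mark vectors
`H ↦ |X^H|` of finite `G`-sets `X`.  (Marks are constant on conjugacy classes, so this is the
image of the usual embedding `A(G) → ∏_{(H) ∈ ccs(G)} ℤ`.) -/
def burnsideRing (G : Type) [Group G] : Subring ((Subgroup G) → ℤ) :=
  Subring.closure { f | ∃ (X : Type) (_ : Fintype X) (_ : MulAction G X),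
    f = fun H : Subgroup G => (Nat.card (MulAction.fixedPoints H X) : ℤ) }

/-!
The coset `gK ∈ G/K` has stabilizer `gKg⁻¹`, so `(G/K)^L` is nonempty exactly when `L` is
subconjugate to `K`. Two subgroups of a finite group that are subconjugate to each other are
conjugate (compare orders), so for non-conjugate `H`, `J` either `J` is not subconjugate to `H`,
and `X = G/H`, `Y = ∅` separate them, or `H` is not subconjugate to `J`, and `X = G/J` separates
them from the trivial `G`-set `Y` with `|(G/J)^J|` points. The difference of the mark vectors of
`X` and `Y` is the required element of the Burnside ring.
-/

open MulAction

def IsSubconjSubgroup {G : Type*} [Group G] (J H : Subgroup G) : Prop :=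
  ∃ g : G, J ≤ H.map (MulAut.conj g).toMonoidHom

section

universe u

variable {G : Type u} [Group G]

theorem mem_fixedPoints_subgroup_iff_le_stabilizer {X : Type*} [MulAction G X]
    {J : Subgroup G} {x : X} : x ∈ fixedPoints J X ↔ J ≤ stabilizer G x :=
  ⟨fun h _ hj => h ⟨_, hj⟩, fun h j => h j.2⟩

theorem fixedPoints_eq_univ_of_forall_smul_eq {X : Type*} [MulAction G X]
    (h : ∀ (g : G) (x : X), g • x = x) (K : Subgroup G) : fixedPoints K X = Set.univ :=
  Set.eq_univ_of_forall fun x k => h k x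

theorem stabilizer_quotient_mk (H : Subgroup G) (g : G) :
    stabilizer G (g : G ⧸ H) = H.map (MulAut.conj g).toMonoidHom := by
  have : (g : G ⧸ H) = g • ((1 : G) : G ⧸ H) := by simp
  rw [this, stabilizer_smul_eq_stabilizer_map_conj, stabilizer_quotient]

theorem fixedPoints_quotient_nonempty_iff (H J : Subgroup G) :
    (fixedPoints J (G ⧸ H)).Nonempty ↔ IsSubconjSubgroup J H := by
  constructor
  · rintro ⟨q, hq⟩
    induction q using QuotientGroup.induction_on with
    | H g =>
      exact ⟨g, stabilizer_quotient_mk H g ▸ mem_fixedPoints_subgroup_iff_le_stabilizer.1 hq⟩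
  · rintro ⟨g, hg⟩
    exact ⟨g, mem_fixedPoints_subgroup_iff_le_stabilizer.2 (stabilizer_quotient_mk H g ▸ hg)⟩

theorem card_fixedPoints_quotient_eq_zero_iff [Finite G] (H J : Subgroup G) :
    Nat.card (fixedPoints J (G ⧸ H)) = 0 ↔ ¬ IsSubconjSubgroup J H := by
  rw [← fixedPoints_quotient_nonempty_iff, Nat.card_coe_set_eq, Set.ncard_eq_zero,
    Set.not_nonempty_iff_eq_empty]

theorem IsSubconjSubgroup.refl (H : Subgroup G) : IsSubconjSubgroup H H :=
  ⟨1, fun h hh => ⟨h, hh, by simp⟩⟩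

theorem card_map_conj (K : Subgroup G) (g : G) :
    Nat.card (K.map (MulAut.conj g).toMonoidHom) = Nat.card K :=
  Subgroup.card_map_of_injective (MulAut.conj g).injective

theorem IsSubconjSubgroup.isConjSubgroup [Finite G] {H J : Subgroup G}
    (hJH : IsSubconjSubgroup J H) (hHJ : IsSubconjSubgroup H J) : IsConjSubgroup H J := by
  obtain ⟨g, hg⟩ := hJH
  obtain ⟨k, hk⟩ := hHJ
  have hH : Nat.card H ≤ Nat.card J := card_map_conj J k ▸ Subgroup.card_le_of_le hk
  refine ⟨g, (Subgroup.eq_of_le_of_card_ge hg ?_).symm⟩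
  rwa [card_map_conj]

theorem exists_card_fixedPoints_eq_ne [Finite G] {H J : Subgroup G}
    (hHJ : ¬ IsConjSubgroup H J) :
    ∃ (X : Type u) (_ : Fintype X) (_ : MulAction G X) (n : ℕ),
      Nat.card (fixedPoints J X) = n ∧ Nat.card (fixedPoints H X) ≠ n := by
  have hself (K : Subgroup G) : Nat.card (fixedPoints K (G ⧸ K)) ≠ 0 :=
    (card_fixedPoints_quotient_eq_zero_iff K K).not.2 (not_not.2 (.refl K))
  by_cases hJH : IsSubconjSubgroup J H
  · have hH : Nat.card (fixedPoints H (G ⧸ J)) = 0 :=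
      (card_fixedPoints_quotient_eq_zero_iff J H).2 fun h => hHJ (hJH.isConjSubgroup h)
    exact ⟨G ⧸ J, Fintype.ofFinite _, inferInstance, _, rfl, hH ▸ (hself J).symm⟩
  · exact ⟨G ⧸ H, Fintype.ofFinite _, inferInstance, 0,
      (card_fixedPoints_quotient_eq_zero_iff H J).2 hJH, hself H⟩

end

theorem marks_mem_burnsideRing (G : Type) [Group G] (X : Type) [Fintype X] [MulAction G X] :
    (fun K : Subgroup G => (Nat.card (fixedPoints K X) : ℤ)) ∈ burnsideRing G :=
  Subring.subset_closure ⟨X, inferInstance, inferInstance, rfl⟩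

/-- Let `G` be a finite group and `H, J` non-conjugate subgroups of `G`.  Then there are finite
`G`-sets `X` and `Y` with `|X^J| = |Y^J|` but `|X^H| ≠ |Y^H|`; equivalently, the mark
homomorphisms realize the Burnside ring `A(G)` as a B-ring inside the ghost ring. -/
theorem stmt_12 (G : Type) [Group G] [Finite G] (H J : Subgroup G)
    (hHJ : ¬ IsConjSubgroup H J) :
    (∃ (X Y : Type) (_ : Fintype X) (_ : Fintype Y) (_ : MulAction G X) (_ : MulAction G Y),
      Nat.card (MulAction.fixedPoints J X) = Nat.card (MulAction.fixedPoints J Y) ∧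
      Nat.card (MulAction.fixedPoints H X) ≠ Nat.card (MulAction.fixedPoints H Y)) ∧
    (∃ r ∈ burnsideRing G, r H ≠ 0 ∧ r J = 0) := by
  obtain ⟨X, _, _, n, hJ, hH⟩ := exists_card_fixedPoints_eq_ne hHJ
  let _ : MulAction G (Fin n) := MulAction.compHom _ (1 : G →* Unit)
  have hY (K : Subgroup G) : Nat.card (fixedPoints K (Fin n)) = n := by
    rw [fixedPoints_eq_univ_of_forall_smul_eq (fun _ _ => rfl), Nat.card_univ, Nat.card_fin]
  refine ⟨⟨X, Fin n, inferInstance, inferInstance, inferInstance, inferInstance,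
    by rw [hY, hJ], by rwa [hY]⟩, ?_⟩
  refine ⟨_, sub_mem (marks_mem_burnsideRing G X) (marks_mem_burnsideRing G (Fin n)), ?_, ?_⟩
  · rw [Pi.sub_apply, hY, sub_ne_zero]
    exact_mod_cast hH
  · simp only [Pi.sub_apply, hY, hJ, sub_self]
end

section
/- Let G be a finite group, let H and J be non-conjugate subgroups of G, and let d be a positive integer such that d divides |X^H| − |X^J| for every finite G-set X. Then d divides |G|. (Equivalently, d(H, J) divides |G| in the Burnside ring A(G) regarded as a B-ring via the mark homomorphisms.) -/
/-!
One of `H`, `J` is not subconjugate to the other, say `H` to `J`. Then `H` has no fixed point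
on the coset space `G ⧸ J`, so taking `X = G ⧸ J` shows that `d` divides `|(G ⧸ J)^J| = |N(J) ⧸ J|`,
which divides `|G|`.
-/

namespace Subgroup

variable {G : Type*} [Group G]

def IsSubconj (J H : Subgroup G) : Prop :=
  ∃ g : G, J.map (MulAut.conj g).toMonoidHom ≤ H

theorem isSubconj_of_mem_fixedPoints {H J : Subgroup G} {x : G ⧸ H}
    (hx : x ∈ MulAction.fixedPoints J (G ⧸ H)) : J.IsSubconj H := by
  obtain ⟨g, rfl⟩ := QuotientGroup.mk_surjective x
  refine ⟨g⁻¹, ?_⟩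
  rintro _ ⟨j, hj, rfl⟩
  have hfix : ((j⁻¹ * g : G) : G ⧸ H) = g := hx ⟨j⁻¹, inv_mem hj⟩
  rw [QuotientGroup.eq] at hfix
  simpa [mul_assoc] using hfix

theorem card_fixedPoints_quotient_eq_zero {H J : Subgroup G} (h : ¬ J.IsSubconj H) :
    Nat.card (MulAction.fixedPoints J (G ⧸ H)) = 0 :=
  Nat.card_eq_zero.mpr <| .inl <| isEmpty_subtype _ |>.mpr fun _ hx =>
    h (isSubconj_of_mem_fixedPoints hx)

theorem card_fixedPoints_quotient_self_dvd_card [Finite G] (H : Subgroup G) :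
    Nat.card (MulAction.fixedPoints H (G ⧸ H)) ∣ Nat.card G := by
  rw [Nat.card_congr (Sylow.fixedPointsMulLeftCosetsEquivQuotient H)]
  exact (card_quotient_dvd_card _).trans (card_subgroup_dvd_card _)

theorem card_map_conj (H : Subgroup G) (g : G) :
    Nat.card (H.map (MulAut.conj g).toMonoidHom) = Nat.card H :=
  card_map_of_injective (MulAut.conj g).injective

theorem IsSubconj.isConjSubgroup [Finite G] {H J : Subgroup G} (hHJ : H.IsSubconj J)
    (hJH : J.IsSubconj H) : IsConjSubgroup H J := by
  obtain ⟨g, hg⟩ := hHJ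
  obtain ⟨k, hk⟩ := hJH
  refine ⟨g, eq_of_le_of_card_ge hg ?_⟩
  calc Nat.card J = Nat.card (J.map (MulAut.conj k).toMonoidHom) := (card_map_conj J k).symm
    _ ≤ Nat.card H := card_le_of_le hk
    _ = Nat.card (H.map (MulAut.conj g).toMonoidHom) := (card_map_conj H g).symm

theorem dvd_card_of_dvd_card_fixedPoints_quotient_sub [Finite G] {H J : Subgroup G}
    (hHJ : ¬ H.IsSubconj J) {d : ℕ}
    (hd : (d : ℤ) ∣ (Nat.card (MulAction.fixedPoints H (G ⧸ J)) : ℤ) -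
      (Nat.card (MulAction.fixedPoints J (G ⧸ J)) : ℤ)) :
    d ∣ Nat.card G := by
  rw [card_fixedPoints_quotient_eq_zero hHJ, Nat.cast_zero, zero_sub, dvd_neg] at hd
  exact (Int.natCast_dvd_natCast.mp hd).trans (card_fixedPoints_quotient_self_dvd_card J)

end Subgroup

open Subgroup in
theorem stmt_13_general (G : Type) [Group G] [Finite G] (H J : Subgroup G)
    (hHJ : ¬ IsConjSubgroup H J) (d : ℕ)
    (hdvd : ∀ (X : Type) (_ : Fintype X) (_ : MulAction G X),
      (d : ℤ) ∣ ((Nat.card (MulAction.fixedPoints H X) : ℤ) -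
        (Nat.card (MulAction.fixedPoints J X) : ℤ))) :
    d ∣ Nat.card G := by
  by_cases hJH : J.IsSubconj H
  · exact dvd_card_of_dvd_card_fixedPoints_quotient_sub
      (fun hHJ' => hHJ (hHJ'.isConjSubgroup hJH)) (hdvd (G ⧸ J) (.ofFinite _) inferInstance)
  · exact dvd_card_of_dvd_card_fixedPoints_quotient_sub hJH
      (dvd_sub_comm.mp (hdvd (G ⧸ H) (.ofFinite _) inferInstance))

/-- Let `G` be a finite group, `H` and `J` non-conjugate subgroups of `G`, and `d` a positive
integer dividing `|X^H| - |X^J|` for every finite `G`-set `X`.  Then `d` divides `|G|`.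
(Equivalently, `d(H, J) ∣ |G|` in the Burnside ring `A(G)` regarded as a B-ring via the mark
homomorphisms.) -/
theorem stmt_13 (G : Type) [Group G] [Finite G] (H J : Subgroup G)
    (hHJ : ¬ IsConjSubgroup H J) (d : ℕ) (hd : 0 < d)
    (hdvd : ∀ (X : Type) (_ : Fintype X) (_ : MulAction G X),
      (d : ℤ) ∣ ((Nat.card (MulAction.fixedPoints H X) : ℤ) -
        (Nat.card (MulAction.fixedPoints J X) : ℤ))) :
    d ∣ Nat.card G :=
  stmt_13_general G H J hHJ d hdvd
end

section
/- Let F be a field and let S be a commutative local finite-dimensional F-algebra with maximal ideal 𝓜 such that S/𝓜 ≅ F and dim_F 𝓜/𝓜² ≤ 1. Then S is symmetric: there exists an F-linear map λ : S → F whose kernel contains no non-zero ideal of S. -/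
/-!
Nakayama's lemma turns `dim 𝓜/𝓜² ≤ 1` into `𝓜 = (t)`, and `t` is nilpotent because `S` is
Artinian. Writing a non-zero `x` as `t ^ m * c` with `t ∤ c` forces `c` to be a
unit, so every non-zero ideal contains the last non-zero power `t ^ (n - 1)` of `t`. Any linear form
not vanishing at `t ^ (n - 1)` then works.
-/

open IsLocalRing Module

theorem IsLocalRing.isPrincipal_maximalIdeal_of_finrank_cotangent_le_one {F R : Type*} [Field F]
    [CommRing R] [IsLocalRing R] [Algebra F R] [Module.Finite F R]
    (h : finrank F (maximalIdeal R).Cotangent ≤ 1) : (maximalIdeal R).IsPrincipal := by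
  have : IsNoetherianRing R := isNoetherian_of_tower F inferInstance
  have : Module.Finite F (maximalIdeal R).Cotangent :=
    Module.Finite.of_surjective ((maximalIdeal R).toCotangent.restrictScalars F)
      (maximalIdeal R).toCotangent_surjective
  obtain ⟨v, hv⟩ := finrank_le_one_iff.mp h
  refine finrank_cotangentSpace_le_one_iff.mp (finrank_le_one v fun w ↦ ?_)
  obtain ⟨c, rfl⟩ := hv w
  exact ⟨algebraMap R (ResidueField R) (algebraMap F R c), by rw [algebraMap_smul, algebraMap_smul]⟩

theorem IsLocalRing.pow_pred_mem_of_maximalIdeal_eq_span {R : Type*} [CommRing R] [IsLocalRing R]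
    {t : R} (ht : maximalIdeal R = Ideal.span {t}) {n : ℕ} (hn : t ^ n = 0) {J : Ideal R}
    (hJ : J ≠ ⊥) : t ^ (n - 1) ∈ J := by
  obtain ⟨x, hxJ, hx⟩ := Submodule.exists_mem_ne_zero_of_ne_bot hJ
  have hfin : FiniteMultiplicity t x :=
    ⟨n, fun hdvd ↦ hx (zero_dvd_iff.mp (by rwa [pow_succ, hn, zero_mul] at hdvd))⟩
  obtain ⟨c, hxc, hc⟩ := hfin.exists_eq_pow_mul_and_not_dvd
  set m := multiplicity t x
  have hcu : IsUnit c := by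
    by_contra hnu
    exact hc (Ideal.mem_span_singleton.mp (ht ▸ (mem_maximalIdeal c).mpr hnu))
  have hmn : m < n := by
    by_contra! hle
    exact hx (by rw [hxc, pow_eq_zero_of_le hle hn, zero_mul])
  have htm : t ^ m ∈ J := by
    rwa [← Ideal.mul_unit_mem_iff_mem J hcu, ← hxc]
  exact J.mem_of_dvd (pow_dvd_pow t (Nat.le_sub_one_of_lt hmn)) htm

theorem stmt_19_general (F : Type) [Field F] (S : Type) [CommRing S] [Algebra F S]
    [FiniteDimensional F S] [IsLocalRing S]
    (hdim : Module.finrank F (IsLocalRing.maximalIdeal S).Cotangent ≤ 1) :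
    ∃ lam : S →ₗ[F] F, ∀ J : Ideal S, (∀ x ∈ J, lam x = 0) → J = ⊥ := by
  have : IsArtinianRing S := isArtinian_of_tower F inferInstance
  obtain ⟨t, ht⟩ := (isPrincipal_maximalIdeal_of_finrank_cotangent_le_one hdim).principal
  have hnil : IsNilpotent t :=
    Ring.KrullDimLE.isNilpotent_iff_mem_maximalIdeal.mpr (ht ▸ Ideal.mem_span_singleton_self t)
  obtain ⟨lam, hlam⟩ := Projective.exists_dual_ne_zero F (pow_pred_nilpotencyClass hnil)
  refine ⟨lam, fun J hJ ↦ by_contra fun hJ₀ ↦ hlam (hJ _ ?_)⟩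
  exact pow_pred_mem_of_maximalIdeal_eq_span ht (pow_nilpotencyClass hnil) hJ₀

/-- Let `F` be a field and `S` a commutative local finite-dimensional `F`-algebra with maximal
ideal `𝓜` such that `S/𝓜 ≅ F` and `dim_F 𝓜/𝓜² ≤ 1`.  Then `S` is symmetric: there is an
`F`-linear map `λ : S → F` whose kernel contains no non-zero ideal of `S`. -/
theorem stmt_19 (F : Type) [Field F] (S : Type) [CommRing S] [Algebra F S]
    [FiniteDimensional F S] [IsLocalRing S]
    (hres : Nonempty ((S ⧸ IsLocalRing.maximalIdeal S) ≃ₐ[F] F))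
    (hdim : Module.finrank F (IsLocalRing.maximalIdeal S).Cotangent ≤ 1) :
    ∃ lam : S →ₗ[F] F, ∀ J : Ideal S, (∀ x ∈ J, lam x = 0) → J = ⊥ :=
  stmt_19_general F S hdim
end
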